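/- arXiv:2403.04597 — 2 statements merged into one kernel-verified Lean document; each statement's English description precedes it below -/
import Mathlib

section
/- Let V and W be F1-representations of a quiver Q, K a field, and C an admissible connected component of Γ_V ⊗ Γ_W. Then the K-linear map b^C : V^K → W^K defined on basis vectors by b^C(v) = Σ_{(v,w) ∈ C_0} w is a morphism of K-linear quiver representations, i.e., it commutes with the structure maps of V^K and W^K. -/
/-!
On the basis vector `v ∈ V_{s a}`, the coefficient of `w' ∈ W_{t a}` in `W_a (b^C v)` counts
the `w` with `(v, w) ∈ C` and `W_a w = w'`, of which there is at most one since `W_a` is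
injective; in `b^C (V_a v)` it is the indicator of `V_a v ≠ 0` and `(V_a v, w') ∈ C`.
The two agree because `C` is closed under the arrows of `Γ_V ⊗ Γ_W`: reflecting successors
gives `V_a v ≠ 0`, making `(v, w) → (V_a v, w')` an arrow, and inducing predecessors
supplies the `w` for the converse.
-/

open scoped Classical

section

/- `Q` is a quiver with vertices `ι`, arrows `A` and source/target maps `s,t`.
`V` and `W` are `F1`-representations of `Q`, encoded by the families `BV i`,
`BW i` of nonzero elements of the pointed sets `V_i`, `W_i` and by the
`Option`-valued structure maps (`none` standing for the zero element),
injective away from `none`. -/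
variable {ι A : Type} (s t : A → ι) (BV BW : ι → Type)
  (Vmap : ∀ a : A, BV (s a) → Option (BV (t a)))
  (Wmap : ∀ a : A, BW (s a) → Option (BW (t a)))

/-- Vertices of the tensor product coefficient quiver `Γ_V ⊗ Γ_W`:
pairs of nonzero elements over the same vertex of `Q`. -/
def TVert : Type := Σ i : ι, BV i × BW i

/-- Undirected adjacency in `Γ_V ⊗ Γ_W`: there is an arrow
`(v,w) → (V_a v, W_a w)` for every arrow `a` of `Q` with both images
nonzero. -/
def TAdj (x y : TVert BV BW) : Prop :=
  ∃ (a : A) (v : BV (s a)) (w : BW (s a)) (v' : BV (t a)) (w' : BW (t a)),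
    Vmap a v = some v' ∧ Wmap a w = some w' ∧
    ((x = ⟨s a, (v, w)⟩ ∧ y = ⟨t a, (v', w')⟩) ∨
     (y = ⟨s a, (v, w)⟩ ∧ x = ⟨t a, (v', w')⟩))

/-- `C` is a connected component of `Γ_V ⊗ Γ_W`: nonempty, closed under
adjacency, and any two of its vertices are connected. -/
def IsComponent (C : Set (TVert BV BW)) : Prop :=
  C.Nonempty ∧
  (∀ x ∈ C, ∀ y, TAdj s t BV BW Vmap Wmap x y → y ∈ C) ∧
  (∀ x ∈ C, ∀ y ∈ C, Relation.ReflTransGen (TAdj s t BV BW Vmap Wmap) x y)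

/-- `C` reflects successors: for `(v,w) ∈ C` and an arrow `a` of `Q` with
`W_a w ≠ 0`, also `V_a v ≠ 0`. -/
def ReflectsSuccessors (C : Set (TVert BV BW)) : Prop :=
  ∀ (a : A) (v : BV (s a)) (w : BW (s a)),
    (⟨s a, (v, w)⟩ : TVert BV BW) ∈ C → Wmap a w ≠ none → Vmap a v ≠ none

/-- `C` induces predecessors: for `(v',w') ∈ C`, an arrow `a` of `Q` and `v`
with `V_a v = v'`, there exists `w` with `W_a w = w'`. -/
def InducesPredecessors (C : Set (TVert BV BW)) : Prop :=
  ∀ (a : A) (v' : BV (t a)) (w' : BW (t a)),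
    (⟨t a, (v', w')⟩ : TVert BV BW) ∈ C →
    ∀ v : BV (s a), Vmap a v = some v' → ∃ w : BW (s a), Wmap a w = some w'

/-- `C` is admissible if it reflects successors and induces predecessors. -/
def Admissible (C : Set (TVert BV BW)) : Prop :=
  ReflectsSuccessors s t BV BW Vmap Wmap C ∧
  InducesPredecessors s t BV BW Vmap Wmap C

variable (K : Type) [Field K] [∀ i, Fintype (BV i)] [∀ i, Fintype (BW i)]

/-- The structure map of the scalar extension along an arrow `a`: the basis
vector `v` is sent to `w` if `Vmap a v = some w` and to `0` otherwise. -/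
noncomputable def structK (a : A) : (BV (s a) → K) →ₗ[K] (BV (t a) → K) where
  toFun x w := ∑ v : BV (s a), (if Vmap a v = some w then (1 : K) else 0) * x v
  map_add' x y := by funext w; simp [mul_add, Finset.sum_add_distrib]
  map_smul' c x := by funext w; simp [Finset.mul_sum, mul_left_comm]

/-- The `K`-linear map `b^C : V^K → W^K` associated to a set `C` of vertices
of `Γ_V ⊗ Γ_W`: the basis vector `v` is sent to `Σ_{(v,w) ∈ C} w`. -/
noncomputable def bC (C : Set (TVert BV BW)) (i : ι) :
    (BV i → K) →ₗ[K] (BW i → K) where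
  toFun x w := ∑ v : BV i,
    (if (⟨i, (v, w)⟩ : TVert BV BW) ∈ C then (1 : K) else 0) * x v
  map_add' x y := by funext w; simp [mul_add, Finset.sum_add_distrib]
  map_smul' c x := by funext w; simp [Finset.mul_sum, mul_left_comm]

end

section

variable {ι A : Type} {s t : A → ι} {BV BW : ι → Type}
  {Vmap : ∀ a : A, BV (s a) → Option (BV (t a))}
  {Wmap : ∀ a : A, BW (s a) → Option (BW (t a))}

theorem structK_apply (K : Type) [Field K] [∀ i, Fintype (BV i)] (a : A) (x : BV (s a) → K)
    (u : BV (t a)) :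
    structK s t BV Vmap K a x u = ∑ v, (if Vmap a v = some u then 1 else 0) * x v :=
  rfl

theorem bC_apply (K : Type) [Field K] [∀ i, Fintype (BV i)] [∀ i, Fintype (BW i)]
    (C : Set (TVert BV BW)) (i : ι) (x : BV i → K) (w : BW i) :
    bC BV BW K C i x w = ∑ v, (if (⟨i, (v, w)⟩ : TVert BV BW) ∈ C then 1 else 0) * x v :=
  rfl

theorem structK_bC_apply {K : Type} [Field K] [∀ i, Fintype (BV i)] [∀ i, Fintype (BW i)]
    {a : A} (hW : ∀ w₁ w₂ u, Wmap a w₁ = some u → Wmap a w₂ = some u → w₁ = w₂)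
    (C : Set (TVert BV BW)) (x : BV (s a) → K) (w' : BW (t a)) :
    structK s t BW Wmap K a (bC BV BW K C (s a) x) w' =
      ∑ v, if ∃ w, Wmap a w = some w' ∧ (⟨s a, (v, w)⟩ : TVert BV BW) ∈ C then x v else 0 := by
  simp only [structK_apply, bC_apply, Finset.mul_sum, ite_zero_mul_ite_zero, boole_mul, one_mul]
  rw [Finset.sum_comm]
  refine Finset.sum_congr rfl fun v _ => ?_
  rw [Finset.sum_ite_zero _ _ fun w₁ _ w₂ _ h₁ h₂ => hW w₁ w₂ w' h₁.1 h₂.1]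
  simp only [Finset.mem_univ, true_and]

theorem bC_structK_apply {K : Type} [Field K] [∀ i, Fintype (BV i)] [∀ i, Fintype (BW i)]
    {a : A} (C : Set (TVert BV BW)) (x : BV (s a) → K) (w' : BW (t a)) :
    bC BV BW K C (t a) (structK s t BV Vmap K a x) w' =
      ∑ v, if ∃ v', (⟨t a, (v', w')⟩ : TVert BV BW) ∈ C ∧ Vmap a v = some v' then x v else 0 := by
  simp only [structK_apply, bC_apply, Finset.mul_sum, ite_zero_mul_ite_zero, boole_mul, one_mul]
  rw [Finset.sum_comm]
  refine Finset.sum_congr rfl fun v _ => ?_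
  rw [Finset.sum_ite_zero _ _ fun v₁ _ v₂ _ h₁ h₂ =>
    Option.some_injective _ (h₁.2.symm.trans h₂.2)]
  simp only [Finset.mem_univ, true_and]

theorem Admissible.exists_source_mem_iff_exists_target_mem {C : Set (TVert BV BW)}
    (hclosed : ∀ x ∈ C, ∀ y, TAdj s t BV BW Vmap Wmap x y → y ∈ C)
    (hadm : Admissible s t BV BW Vmap Wmap C) (a : A) (v : BV (s a)) (w' : BW (t a)) :
    (∃ w, Wmap a w = some w' ∧ (⟨s a, (v, w)⟩ : TVert BV BW) ∈ C) ↔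
      ∃ v', (⟨t a, (v', w')⟩ : TVert BV BW) ∈ C ∧ Vmap a v = some v' := by
  constructor
  · rintro ⟨w, hw, hvw⟩
    obtain ⟨v', hv'⟩ := Option.ne_none_iff_exists'.mp (hadm.1 a v w hvw (by simp [hw]))
    exact ⟨v', hclosed _ hvw _ ⟨a, v, w, v', w', hv', hw, Or.inl ⟨rfl, rfl⟩⟩, hv'⟩
  · rintro ⟨v', hv'w', hv'⟩
    obtain ⟨w, hw⟩ := hadm.2 a v' w' hv'w' v hv'
    exact ⟨w, hw, hclosed _ hv'w' _ ⟨a, v, w, v', w', hv', hw, Or.inr ⟨rfl, rfl⟩⟩⟩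

end

section

variable {ι A : Type} (s t : A → ι) (BV BW : ι → Type)
  (Vmap : ∀ a : A, BV (s a) → Option (BV (t a)))
  (Wmap : ∀ a : A, BW (s a) → Option (BW (t a)))

variable (K : Type) [Field K] [∀ i, Fintype (BV i)] [∀ i, Fintype (BW i)]

theorem bC_is_morphism
    (Winj : ∀ (a : A) (w w' : BW (s a)) (u : BW (t a)),
      Wmap a w = some u → Wmap a w' = some u → w = w')
    (C : Set (TVert BV BW))
    (hcomp : IsComponent s t BV BW Vmap Wmap C)
    (hadm : Admissible s t BV BW Vmap Wmap C) :
    ∀ a : A,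
      (structK s t BW Wmap K a).comp (bC BV BW K C (s a)) =
      (bC BV BW K C (t a)).comp (structK s t BV Vmap K a) := by
  intro a
  refine LinearMap.ext fun x => funext fun w' => ?_
  simp only [LinearMap.comp_apply, structK_bC_apply (Winj a), bC_structK_apply]
  exact Finset.sum_congr rfl fun v _ =>
    if_congr (hadm.exists_source_mem_iff_exists_target_mem hcomp.2.1 a v w') rfl rfl

end
end

section
/- Let V and W be F1-representations of a quiver Q, K a field, and let C be a connected component of Γ_V ⊗ Γ_W that is not admissible. Then for every morphism f : V^K → W^K of K-representations of Q and every vertex (v,w) of C, the coefficient f_{v,w} of w in f(v) is zero. -/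
/-! A morphism `f` intertwines the structure maps. Comparing the coefficients of `W_a w` in
`W_a (f v) = f (V_a v)` gives `f_{v,w} = f_{V_a v, W_a w}` along every arrow of `Γ_V ⊗ Γ_W`
(this uses injectivity of `W_a`), so `f_{v,w}` is constant on the component `C`. A failure of
admissibility exhibits a vertex of `C` at which one side of this identity is zero: if
`V_a v = 0 ≠ W_a w` the right side vanishes, and if `V_a v = v'` while `w'` has no
`W_a`-preimage the left side does. -/

open scoped Classical

section

/- `Q` is a quiver with vertices `ι`, arrows `A` and source/target maps `s,t`.
`V` and `W` are `F1`-representations of `Q`, encoded by the families `BV i`,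
`BW i` of nonzero elements of the pointed sets `V_i`, `W_i` and by the
`Option`-valued structure maps (`none` standing for the zero element),
injective away from `none`. -/
variable {ι A : Type} (s t : A → ι) (BV BW : ι → Type)
  (Vmap : ∀ a : A, BV (s a) → Option (BV (t a)))
  (Wmap : ∀ a : A, BW (s a) → Option (BW (t a)))

variable (K : Type) [Field K] [∀ i, Fintype (BV i)] [∀ i, Fintype (BW i)]

section Coefficients

variable {s t BV BW Vmap Wmap K}

theorem structK_single_apply [∀ i, DecidableEq (BV i)] (a : A) (v : BV (s a)) (u : BV (t a)) :
    structK s t BV Vmap K a (Pi.single v 1) u = if Vmap a v = some u then 1 else 0 := by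
  simp only [structK, LinearMap.coe_mk, AddHom.coe_mk, Pi.single_apply, mul_ite, mul_one,
    mul_zero]
  simp

theorem structK_single_of_eq_some [∀ i, DecidableEq (BV i)] {a : A} {v : BV (s a)}
    {v' : BV (t a)} (hv : Vmap a v = some v') :
    structK s t BV Vmap K a (Pi.single v 1) = Pi.single v' 1 := by
  funext u
  simp [structK_single_apply, hv, Pi.single_apply, eq_comm]

theorem structK_single_of_eq_none [∀ i, DecidableEq (BV i)] {a : A} {v : BV (s a)}
    (hv : Vmap a v = none) :
    structK s t BV Vmap K a (Pi.single v 1) = 0 := by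
  funext u
  simp [structK_single_apply, hv]

theorem structK_apply_of_eq_some
    (inj : ∀ (a : A) (v v' : BV (s a)) (u : BV (t a)),
      Vmap a v = some u → Vmap a v' = some u → v = v')
    {a : A} {v : BV (s a)} {v' : BV (t a)} (hv : Vmap a v = some v')
    (x : BV (s a) → K) :
    structK s t BV Vmap K a x v' = x v := by
  simp only [structK, LinearMap.coe_mk, AddHom.coe_mk]
  rw [Finset.sum_eq_single v (fun u _ huv => by
    simp [show Vmap a u ≠ some v' from fun hu => huv (inj a u v v' hu hv)]) (by simp)]
  simp [hv]

theorem structK_apply_eq_zero_of_forall_ne {a : A} {v' : BV (t a)}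
    (hv' : ∀ v : BV (s a), Vmap a v ≠ some v') (x : BV (s a) → K) :
    structK s t BV Vmap K a x v' = 0 :=
  Finset.sum_eq_zero fun v _ => by simp [hv' v]

variable [∀ i, DecidableEq (BV i)]

omit [∀ i, Fintype (BV i)] [∀ i, Fintype (BW i)] in
def coeff (f : ∀ i, (BV i → K) →ₗ[K] (BW i → K)) (x : TVert BV BW) : K :=
  f x.1 (Pi.single x.2.1 1) x.2.2

variable (Winj : ∀ (a : A) (w w' : BW (s a)) (u : BW (t a)),
      Wmap a w = some u → Wmap a w' = some u → w = w')
  {f : ∀ i, (BV i → K) →ₗ[K] (BW i → K)}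
  (hf : ∀ a : A, (structK s t BW Wmap K a).comp (f (s a)) =
      (f (t a)).comp (structK s t BV Vmap K a))
include hf

theorem coeff_eq_zero_of_forall_ne {a : A} {v : BV (s a)} {v' : BV (t a)} {w' : BW (t a)}
    (hv : Vmap a v = some v') (hw' : ∀ w : BW (s a), Wmap a w ≠ some w') :
    coeff f ⟨t a, (v', w')⟩ = 0 := by
  calc f (t a) (Pi.single v' 1) w'
      = f (t a) (structK s t BV Vmap K a (Pi.single v 1)) w' := by
        rw [structK_single_of_eq_some hv]
    _ = structK s t BW Wmap K a (f (s a) (Pi.single v 1)) w' :=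
        (congrFun (LinearMap.congr_fun (hf a) _) w').symm
    _ = 0 := structK_apply_eq_zero_of_forall_ne hw' _

include Winj

theorem coeff_eq_apply_structK_single {a : A} {v : BV (s a)} {w : BW (s a)} {w' : BW (t a)}
    (hw : Wmap a w = some w') :
    coeff f ⟨s a, (v, w)⟩ = f (t a) (structK s t BV Vmap K a (Pi.single v 1)) w' :=
  (structK_apply_of_eq_some Winj hw _).symm.trans (congrFun (LinearMap.congr_fun (hf a) _) w')

theorem coeff_eq_of_arrow {a : A} {v : BV (s a)} {w : BW (s a)} {v' : BV (t a)}
    {w' : BW (t a)} (hv : Vmap a v = some v') (hw : Wmap a w = some w') :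
    coeff f ⟨s a, (v, w)⟩ = coeff f ⟨t a, (v', w')⟩ := by
  rw [coeff_eq_apply_structK_single Winj hf hw, structK_single_of_eq_some hv]
  rfl

theorem coeff_eq_zero_of_eq_none {a : A} {v : BV (s a)} {w : BW (s a)} {w' : BW (t a)}
    (hv : Vmap a v = none) (hw : Wmap a w = some w') :
    coeff f ⟨s a, (v, w)⟩ = 0 := by
  rw [coeff_eq_apply_structK_single Winj hf hw, structK_single_of_eq_none hv, map_zero]
  rfl

theorem coeff_eq_of_adj {x y : TVert BV BW} (hxy : TAdj s t BV BW Vmap Wmap x y) :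
    coeff f x = coeff f y := by
  obtain ⟨a, v, w, v', w', hv, hw, ⟨rfl, rfl⟩ | ⟨rfl, rfl⟩⟩ := hxy
  · exact coeff_eq_of_arrow Winj hf hv hw
  · exact (coeff_eq_of_arrow Winj hf hv hw).symm

theorem coeff_eq_of_reflTransGen {x y : TVert BV BW}
    (hxy : Relation.ReflTransGen (TAdj s t BV BW Vmap Wmap) x y) :
    coeff f x = coeff f y := by
  induction hxy with
  | refl => rfl
  | tail _ hyz ih => exact ih.trans (coeff_eq_of_adj Winj hf hyz)

theorem exists_coeff_eq_zero_of_not_admissible {C : Set (TVert BV BW)}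
    (hC : ¬ Admissible s t BV BW Vmap Wmap C) : ∃ x ∈ C, coeff f x = 0 := by
  simp only [Admissible, ReflectsSuccessors, InducesPredecessors, not_and_or] at hC
  push Not at hC
  rcases hC with ⟨a, v, w, hC, hw, hv⟩ | ⟨a, v', w', hC, v, hv, hw'⟩
  · obtain ⟨w', hw'⟩ := Option.ne_none_iff_exists'.mp hw
    exact ⟨_, hC, coeff_eq_zero_of_eq_none Winj hf hv hw'⟩
  · exact ⟨_, hC, coeff_eq_zero_of_forall_ne hf hv hw'⟩

end Coefficients

theorem coeff_zero_of_not_admissible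
    [∀ i, DecidableEq (BV i)]
    (Winj : ∀ (a : A) (w w' : BW (s a)) (u : BW (t a)),
      Wmap a w = some u → Wmap a w' = some u → w = w')
    (C : Set (TVert BV BW))
    (hcomp : IsComponent s t BV BW Vmap Wmap C)
    (hnadm : ¬ Admissible s t BV BW Vmap Wmap C)
    (f : ∀ i, (BV i → K) →ₗ[K] (BW i → K))
    (hf : ∀ a : A, (structK s t BW Wmap K a).comp (f (s a)) =
      (f (t a)).comp (structK s t BV Vmap K a)) :
    ∀ (i : ι) (v : BV i) (w : BW i),
      (⟨i, (v, w)⟩ : TVert BV BW) ∈ C → f i (Pi.single v 1) w = 0 := by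
  intro i v w hvw
  obtain ⟨x, hx, hx0⟩ := exists_coeff_eq_zero_of_not_admissible Winj hf hnadm
  exact (coeff_eq_of_reflTransGen Winj hf (hcomp.2.2 x hx _ hvw)).symm.trans hx0

end
end
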